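/- Let a, b, c, K, H be real numbers with c ≠ 0, Δ := b² - ac > 0, and a·K + 2b·H + c = 0. Set t = (-b + √Δ)/c and suppose D := 1 - 2tH + t²K ≠ 0. Then the parallel surface curvatures Kᵗ = K/D and Hᵗ = (H - tK)/D satisfy 2√Δ·Hᵗ + c = 0, i.e., the parallel surface has constant mean curvature Hᵗ = -c/(2√Δ). -/
import Mathlib


theorem parallel_cmc_bonnet (a b c K H : ℝ) (hc : c ≠ 0)
    (hΔ : 0 < b ^ 2 - a * c)
    (hlw : a * K + 2 * b * H + c = 0)
    (t : ℝ) (ht : t = (-b + Real.sqrt (b ^ 2 - a * c)) / c)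
    (D : ℝ) (hDdef : D = 1 - 2 * t * H + t ^ 2 * K) (hD : D ≠ 0) :
    2 * Real.sqrt (b ^ 2 - a * c) * ((H - t * K) / D) + c = 0 ∧
      (H - t * K) / D = -c / (2 * Real.sqrt (b ^ 2 - a * c)) := by
  set s := Real.sqrt (b ^ 2 - a * c) with hsdef
  have hs : s ^ 2 = b ^ 2 - a * c := Real.sq_sqrt hΔ.le
  have hspos : 0 < s := Real.sqrt_pos.mpr hΔ
  have hct : c * t = -b + s := by rw [ht]; field_simp
  have key : 2 * s * (H - t * K) + c * D = 0 := by
    have : c * (2 * s * (H - t * K) + c * D) = 0 := by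
      rw [hDdef]
      linear_combination c * hlw + (K * c * t - K * (s + b) - 2 * c * H) * hct + (-K) * hs
    exact by
      rcases mul_eq_zero.mp this with h | h
      · exact absurd h hc
      · exact h
  constructor
  · field_simp
    linarith [key]
  · field_simp
    linarith [key]
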